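/- On the elliptic curve E : y² = x³ + 10081·x over ℚ (where 10081 = 17·593), the point P = (1088, 36040) is a rational point of infinite order: nP ≠ O for every nonzero integer n. -/

import Mathlib

open WeierstrassCurve WeierstrassCurve.Affine

/-- The elliptic curve `y² = x³ + 10081x` over `ℚ`, where `10081 = 17 · 593`. -/
def E16 : WeierstrassCurve ℚ := ⟨0, 0, 0, 10081, 0⟩

/-!
On `y² = x³ + a x` the tangent construction gives `x(2P) = ((x² - a) / (2y))²`. If `a` is
`2`-adically integral and `|x|₂ > 1`, then `|x² - a|₂ = |x|₂²` and `|y|₂² = |x|₂³`, so the factor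
`2` in the denominator makes `|x(2P)|₂ = 4 |x|₂`. The points `2ᵏ P` are therefore pairwise
distinct, and `P` has infinite order. For `P = (1088, 36040)` on `E16` this applies to `2P`,
whose `x`-coordinate is `(69039 / 4240)²` with `4240 = 2⁴ · 265`.
-/

def doubleX {F : Type*} [Field F] (a x y : F) : F := ((x ^ 2 - a) / (2 * y)) ^ 2

namespace padicNorm

variable {p : ℕ} [Fact p.Prime]

protected lemma pow (q : ℚ) (n : ℕ) : padicNorm p (q ^ n) = padicNorm p q ^ n :=
  IsAbsoluteValue.abv_pow (padicNorm p) q n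

lemma add_eq_left_of_lt {q r : ℚ} (h : padicNorm p r < padicNorm p q) :
    padicNorm p (q + r) = padicNorm p q := by
  rw [add_eq_max_of_ne h.ne', max_eq_left h.le]

variable {a x y : ℚ}

lemma sq_eq_cube_of_sq_eq_cube_add (ha : padicNorm p a ≤ 1) (hx : 1 < padicNorm p x)
    (hy : y ^ 2 = x ^ 3 + a * x) : padicNorm p y ^ 2 = padicNorm p x ^ 3 := by
  have hx2 : padicNorm p a < padicNorm p (x ^ 2) := by rw [padicNorm.pow]; nlinarith
  rw [← padicNorm.pow, hy, show x ^ 3 + a * x = x * (x ^ 2 + a) by ring, padicNorm.mul,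
    add_eq_left_of_lt hx2, padicNorm.pow]
  ring

lemma doubleX_eq (ha : padicNorm p a ≤ 1) (hx : 1 < padicNorm p x)
    (hy : y ^ 2 = x ^ 3 + a * x) :
    padicNorm p (doubleX a x y) = padicNorm p x / padicNorm p 2 ^ 2 := by
  have hnum : padicNorm p (x ^ 2 - a) = padicNorm p x ^ 2 := by
    rw [sub_eq_add_neg, add_eq_left_of_lt (by rw [padicNorm.neg, padicNorm.pow]; nlinarith),
      padicNorm.pow]
  have hx0 : padicNorm p x ≠ 0 := by positivity
  rw [doubleX, padicNorm.pow, padicNorm.div, padicNorm.mul, hnum, div_pow, mul_pow,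
    sq_eq_cube_of_sq_eq_cube_add ha hx hy]
  field_simp

lemma two_eq_inv_two : padicNorm 2 (2 : ℚ) = 2⁻¹ := by
  simpa using padicNorm.padicNorm_p_of_prime (p := 2)

end padicNorm

namespace WeierstrassCurve.Affine

section ShortNF

variable {F : Type*} [Field F] {W : WeierstrassCurve F} [W.IsShortNF]

lemma negY_of_isShortNF (x y : F) : W.toAffine.negY x y = -y := by
  simp [negY]

lemma equation_iff_of_a₆_eq_zero (ha₆ : W.a₆ = 0) {x y : F} :
    W.toAffine.Equation x y ↔ y ^ 2 = x ^ 3 + W.a₄ * x := by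
  simp [equation_iff, ha₆]

lemma two_nsmul_some_of_a₆_eq_zero [DecidableEq F] (ha₆ : W.a₆ = 0) {x y : F}
    (h : W.toAffine.Nonsingular x y) (hy : 2 * y ≠ 0) :
    ∃ (y' : F) (h' : W.toAffine.Nonsingular (doubleX W.a₄ x y) y'),
      2 • Point.some x y h = Point.some _ _ h' := by
  have hY : y ≠ W.toAffine.negY x y := by
    rw [negY_of_isShortNF]; contrapose! hy; linear_combination hy
  have heq := (equation_iff_of_a₆_eq_zero ha₆).1 h.1
  have hX : W.toAffine.addX x x (W.toAffine.slope x x y y) = doubleX W.a₄ x y := by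
    rw [slope_of_Y_ne rfl hY, negY_of_isShortNF, addX, doubleX]
    simp only [a₁_of_isShortNF, a₂_of_isShortNF, sub_neg_eq_add, ← two_mul]
    have h2 : (2 : F) ≠ 0 := left_ne_zero_of_mul hy
    have hy0 : y ≠ 0 := right_ne_zero_of_mul hy
    field_simp
    linear_combination (-8 * x) * heq
  rw [two_nsmul, Point.add_self_of_Y_ne hY, ← hX]
  exact ⟨_, _, rfl⟩

end ShortNF

section TwoAdic

variable {W : WeierstrassCurve ℚ} [W.IsShortNF] (ha₆ : W.a₆ = 0) (ha₄ : padicNorm 2 W.a₄ ≤ 1)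
include ha₆ ha₄

lemma exists_two_nsmul_some_padicNorm_eq {x y : ℚ} (h : W.toAffine.Nonsingular x y)
    (hx : 1 < padicNorm 2 x) :
    ∃ (x' y' : ℚ) (h' : W.toAffine.Nonsingular x' y'),
      2 • Point.some x y h = Point.some x' y' h' ∧ padicNorm 2 x' = 4 * padicNorm 2 x := by
  have heq := (equation_iff_of_a₆_eq_zero ha₆).1 h.1
  have hy : 2 * y ≠ 0 := by
    have hy3 := padicNorm.sq_eq_cube_of_sq_eq_cube_add ha₄ hx heq
    rintro hy0
    rw [(mul_eq_zero.1 hy0).resolve_left two_ne_zero, padicNorm.zero, zero_pow two_ne_zero] at hy3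
    linarith [one_lt_pow₀ hx three_ne_zero]
  obtain ⟨y', h', hP⟩ := two_nsmul_some_of_a₆_eq_zero ha₆ h hy
  refine ⟨_, y', h', hP, ?_⟩
  rw [padicNorm.doubleX_eq ha₄ hx heq, padicNorm.two_eq_inv_two]
  ring

lemma exists_two_pow_nsmul_some_padicNorm_eq (k : ℕ) {x y : ℚ} (h : W.toAffine.Nonsingular x y)
    (hx : 1 < padicNorm 2 x) :
    ∃ (x' y' : ℚ) (h' : W.toAffine.Nonsingular x' y'),
      2 ^ k • Point.some x y h = Point.some x' y' h' ∧ padicNorm 2 x' = 4 ^ k * padicNorm 2 x := by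
  induction k generalizing x y with
  | zero => exact ⟨x, y, h, one_nsmul _, by ring⟩
  | succ k ih =>
    obtain ⟨x₁, y₁, h₁, hP₁, hx₁⟩ := exists_two_nsmul_some_padicNorm_eq ha₆ ha₄ h hx
    obtain ⟨x₂, y₂, h₂, hP₂, hx₂⟩ := ih h₁ (by rw [hx₁]; linarith)
    refine ⟨x₂, y₂, h₂, ?_, ?_⟩
    · rw [pow_succ', mul_nsmul, hP₁, hP₂]
    · rw [hx₂, hx₁]; ring

theorem not_isOfFinAddOrder_some {x y : ℚ} (h : W.toAffine.Nonsingular x y)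
    (hx : 1 < padicNorm 2 x) : ¬IsOfFinAddOrder (Point.some x y h) := by
  intro hfin
  refine Set.not_infinite.2 hfin.finite_multiples
    (Set.infinite_of_injective_forall_mem (f := fun k : ℕ ↦ 2 ^ k • Point.some x y h) ?_ ?_)
  · intro i j hij
    obtain ⟨xi, yi, hi, hPi, hxi⟩ := exists_two_pow_nsmul_some_padicNorm_eq ha₆ ha₄ i h hx
    obtain ⟨xj, yj, hj, hPj, hxj⟩ := exists_two_pow_nsmul_some_padicNorm_eq ha₆ ha₄ j h hx
    simp only [hPi, hPj, Point.some.injEq] at hij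
    have h4 : (4 : ℚ) ^ i = 4 ^ j := by
      rw [← mul_left_inj' (by positivity : padicNorm 2 x ≠ 0), ← hxi, ← hxj, hij.1]
    exact pow_right_injective₀ (by norm_num) (by norm_num) h4
  · exact fun k ↦ nsmul_mem (AddSubmonoid.mem_multiples _) _

end TwoAdic

end WeierstrassCurve.Affine

instance : E16.IsShortNF := ⟨rfl, rfl, rfl⟩

lemma E16_nonsingular : E16.toAffine.Nonsingular 1088 36040 := by
  rw [nonsingular_iff, equation_iff]
  norm_num [E16]

lemma one_lt_padicNorm_two_doubleX_E16 : 1 < padicNorm 2 (doubleX E16.a₄ 1088 36040) := by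
  have hodd (n : ℕ) (hn : ¬2 ∣ n) : padicNorm 2 (n : ℚ) = 1 := (padicNorm.nat_eq_one_iff n).2 hn
  rw [show doubleX E16.a₄ 1088 36040 = (((1173663 : ℕ) : ℚ) / (2 ^ 4 * (4505 : ℕ))) ^ 2 by
      norm_num [doubleX, E16],
    padicNorm.pow, padicNorm.div, padicNorm.mul, padicNorm.pow, padicNorm.two_eq_inv_two,
    hodd _ (by norm_num), hodd _ (by norm_num)]
  norm_num

theorem stmt16 :
    ∃ h : E16.toAffine.Nonsingular 1088 36040,
      ∀ n : ℤ, n ≠ 0 → n • (WeierstrassCurve.Affine.Point.some _ _ h) ≠ 0 := by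
  refine ⟨E16_nonsingular, fun n hn hnP => ?_⟩
  obtain ⟨y', h', h2P⟩ := two_nsmul_some_of_a₆_eq_zero (W := E16) rfl E16_nonsingular (by norm_num)
  have h2P_infinite := not_isOfFinAddOrder_some rfl (padicNorm.of_nat 10081) h'
    one_lt_padicNorm_two_doubleX_E16
  rw [← h2P] at h2P_infinite
  exact h2P_infinite (isOfFinAddOrder_iff_zsmul_eq_zero.2 ⟨n, hn, hnP⟩).nsmul
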